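/- arXiv:1408.5099 — 4 statements merged into one kernel-verified Lean document; each statement's English description precedes it below -/
import Mathlib

section
/- Let A be a real n×d matrix with rows a_1,…,a_n, let B be a real k×d matrix, and let λ ≥ 1. Suppose (1/λ)·AᵀA ⪯ BᵀB ⪯ AᵀA in the Loewner order. Then for every i, the generalized leverage score satisfies τ_i(A) ≤ τ_i^B(A) ≤ λ·τ_i(A); in particular τ_i^B(A) is finite. -/
open Matrix
open scoped ENNReal

/-- The leverage score of row `i` of `A`:
`τᵢ(A) = inf {‖x‖₂² : Aᵀx = aᵢ}` (the set is nonempty since `x = eᵢ` works). -/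
noncomputable def lev {n d : ℕ} (A : Matrix (Fin n) (Fin d) ℝ) (i : Fin n) : ℝ :=
  sInf {t : ℝ | ∃ x : Fin n → ℝ, Aᵀ *ᵥ x = A i ∧ t = ∑ j, (x j) ^ 2}

/-- The generalized leverage score of a row `a` with respect to `B`:
`τ^B(a) = inf {‖x‖₂² : Bᵀx = a} ∈ [0,∞]`, with `inf ∅ = ∞`. -/
noncomputable def glev {k d : ℕ} (B : Matrix (Fin k) (Fin d) ℝ) (a : Fin d → ℝ) : ℝ≥0∞ :=
  sInf {t : ℝ≥0∞ | ∃ x : Fin k → ℝ, Bᵀ *ᵥ x = a ∧ t = ENNReal.ofReal (∑ j, (x j) ^ 2)}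

/-! Write `τ^M(a)` for the least `‖x‖²` with `Mᵀx = a`. Expanding `‖x - Mv‖² ≥ 0` gives
`‖x‖² ≥ 2⟪a, v⟫ - ‖Mv‖²` for every `v`, with equality at `x = Mu, v = u` when `MᵀMu = a`; so
`τ^M(a) = ⟪u, a⟫ = sup_v (2⟪a, v⟫ - ‖Mv‖²)`. The supremum is antitone in the quadratic form
`‖Mv‖²`, hence `c • AᵀA ⪯ BᵀB` gives `c τ^B(a) ≤ τ^A(a)`, and the two Loewner bounds give the two
inequalities. A suitable `u` exists since `range (MᵀM) = (ker M)ᗮ` and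
`ker B ⊆ ker A ⊆ aᵢ^⊥`. -/

namespace Matrix

variable {m n p : Type*} [Fintype m] [Fintype n] [Fintype p]

theorem exists_transpose_mul_self_mulVec_eq (M : Matrix m n ℝ) {a : n → ℝ}
    (ha : ∀ v, M *ᵥ v = 0 → a ⬝ᵥ v = 0) : ∃ w, (Mᵀ * M) *ᵥ w = a := by
  classical
  have hmem : WithLp.toLp 2 a ∈ ((toEuclideanLin M).adjoint ∘ₗ toEuclideanLin M).range := by
    rw [LinearMap.range_adjoint_comp_self, ← LinearMap.orthogonal_ker, Submodule.mem_orthogonal']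
    intro v hv
    simpa [PiLp.inner_apply, dotProduct, mul_comm] using ha _ congr(WithLp.ofLp $hv)
  obtain ⟨w, hw⟩ := hmem
  rw [← toEuclideanLin_conjTranspose_eq_adjoint] at hw
  exact ⟨WithLp.ofLp w, by simpa [mulVec_mulVec] using congr(WithLp.ofLp $hw)⟩

theorem dotProduct_self_nonneg {R : Type*} [Ring R] [LinearOrder R] [IsStrictOrderedRing R]
    (v : n → R) : 0 ≤ v ⬝ᵥ v :=
  Fintype.sum_nonneg fun _ => mul_self_nonneg _

theorem dotProduct_transpose_mul_self_mulVec (M : Matrix m n ℝ) (v : n → ℝ) :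
    v ⬝ᵥ (Mᵀ * M) *ᵥ v = (M *ᵥ v) ⬝ᵥ (M *ᵥ v) := by
  rw [← mulVec_mulVec, dotProduct_mulVec, vecMul_transpose]

theorem mul_dotProduct_mulVec_le_of_posSemidef {A : Matrix m n ℝ} {B : Matrix p n ℝ} {c : ℝ}
    (h : (Bᵀ * B - c • (Aᵀ * A)).PosSemidef) (v : n → ℝ) :
    c * (A *ᵥ v) ⬝ᵥ (A *ᵥ v) ≤ (B *ᵥ v) ⬝ᵥ (B *ᵥ v) := by
  have := h.dotProduct_mulVec_nonneg v
  simp only [star_trivial, sub_mulVec, smul_mulVec, dotProduct_sub, dotProduct_smul,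
    smul_eq_mul, dotProduct_transpose_mul_self_mulVec] at this
  linarith

theorem mulVec_eq_zero_of_posSemidef {A : Matrix m n ℝ} {B : Matrix p n ℝ} {c : ℝ} (hc : 0 < c)
    (h : (Bᵀ * B - c • (Aᵀ * A)).PosSemidef) {v : n → ℝ} (hv : B *ᵥ v = 0) : A *ᵥ v = 0 := by
  have := mul_dotProduct_mulVec_le_of_posSemidef h v
  rw [hv, dotProduct_zero] at this
  exact dotProduct_self_eq_zero.mp <|
    le_antisymm (nonpos_of_mul_nonpos_right this hc) (dotProduct_self_nonneg _)

theorem two_mul_dotProduct_sub_le_of_transpose_mulVec_eq (M : Matrix m n ℝ) {x : m → ℝ}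
    {a : n → ℝ} (hx : Mᵀ *ᵥ x = a) (v : n → ℝ) :
    2 * (a ⬝ᵥ v) - (M *ᵥ v) ⬝ᵥ (M *ᵥ v) ≤ x ⬝ᵥ x := by
  have hxv : x ⬝ᵥ M *ᵥ v = a ⬝ᵥ v := by rw [dotProduct_mulVec, ← mulVec_transpose, hx]
  have := dotProduct_self_nonneg (x - M *ᵥ v)
  simp only [sub_dotProduct, dotProduct_sub, dotProduct_comm (M *ᵥ v) x, hxv] at this
  linarith

theorem two_mul_dotProduct_sub_le_of_transpose_mul_self_mulVec_eq (M : Matrix m n ℝ)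
    {u a : n → ℝ} (hu : (Mᵀ * M) *ᵥ u = a) (v : n → ℝ) :
    2 * (a ⬝ᵥ v) - (M *ᵥ v) ⬝ᵥ (M *ᵥ v) ≤ u ⬝ᵥ a := by
  have hMu : (M *ᵥ u) ⬝ᵥ (M *ᵥ u) = u ⬝ᵥ a := by
    rw [← dotProduct_transpose_mul_self_mulVec, hu]
  rw [← hMu]
  exact two_mul_dotProduct_sub_le_of_transpose_mulVec_eq M (by rw [mulVec_mulVec, hu]) v

theorem isLeast_sum_sq_of_transpose_mul_self_mulVec_eq (M : Matrix m n ℝ) {u a : n → ℝ}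
    (hu : (Mᵀ * M) *ᵥ u = a) :
    IsLeast {t : ℝ | ∃ x : m → ℝ, Mᵀ *ᵥ x = a ∧ t = ∑ j, x j ^ 2} (u ⬝ᵥ a) := by
  have hsq (x : m → ℝ) : ∑ j, x j ^ 2 = x ⬝ᵥ x := by simp only [dotProduct, sq]
  refine ⟨⟨M *ᵥ u, by rw [mulVec_mulVec, hu], ?_⟩, ?_⟩
  · rw [hsq, ← dotProduct_transpose_mul_self_mulVec, hu]
  · rintro t ⟨x, hx, rfl⟩
    have := two_mul_dotProduct_sub_le_of_transpose_mulVec_eq M hx u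
    rw [← dotProduct_transpose_mul_self_mulVec, hu, dotProduct_comm a] at this
    linarith [hsq x]

theorem mul_dotProduct_le_of_posSemidef {A : Matrix m n ℝ} {B : Matrix p n ℝ} {c : ℝ}
    (hc : 0 ≤ c) (h : (Bᵀ * B - c • (Aᵀ * A)).PosSemidef) {u w a : n → ℝ}
    (hu : (Aᵀ * A) *ᵥ u = a) (hw : (Bᵀ * B) *ᵥ w = a) : c * (w ⬝ᵥ a) ≤ u ⬝ᵥ a := by
  -- the dual formula for `A`, tested at `v = c • w`
  have hA := two_mul_dotProduct_sub_le_of_transpose_mul_self_mulVec_eq A hu (c • w)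
  have hAB := mul_dotProduct_mulVec_le_of_posSemidef h w
  rw [← dotProduct_transpose_mul_self_mulVec B, hw] at hAB
  simp only [mulVec_smul, dotProduct_smul, smul_dotProduct, smul_eq_mul,
    dotProduct_comm a w] at hA
  linarith [mul_le_mul_of_nonneg_left hAB hc]

end Matrix

theorem lev_eq_dotProduct {n d : ℕ} {A : Matrix (Fin n) (Fin d) ℝ} {i : Fin n} {u : Fin d → ℝ}
    (hu : (Aᵀ * A) *ᵥ u = A i) : lev A i = u ⬝ᵥ A i :=
  (isLeast_sum_sq_of_transpose_mul_self_mulVec_eq A hu).csInf_eq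

theorem glev_eq_ofReal_dotProduct {k d : ℕ} {B : Matrix (Fin k) (Fin d) ℝ} {a w : Fin d → ℝ}
    (hw : (Bᵀ * B) *ᵥ w = a) : glev B a = ENNReal.ofReal (w ⬝ᵥ a) := by
  obtain ⟨⟨x, hx, hxw⟩, hle⟩ := isLeast_sum_sq_of_transpose_mul_self_mulVec_eq B hw
  refine IsGLB.sInf_eq (IsLeast.isGLB ⟨⟨x, hx, by rw [hxw]⟩, ?_⟩)
  rintro t ⟨y, hy, rfl⟩
  exact ENNReal.ofReal_le_ofReal (hle ⟨y, hy, rfl⟩)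

/-- if `(1/λ)·AᵀA ⪯ BᵀB ⪯ AᵀA` with `λ ≥ 1`, then
`τᵢ(A) ≤ τᵢ^B(A) ≤ λ·τᵢ(A)`; in particular `τᵢ^B(A)` is finite. -/
theorem stmt3 {n d k : ℕ} (A : Matrix (Fin n) (Fin d) ℝ) (B : Matrix (Fin k) (Fin d) ℝ)
    (lam : ℝ) (hlam : 1 ≤ lam)
    (hlow : (Bᵀ * B - lam⁻¹ • (Aᵀ * A)).PosSemidef)
    (hup : (Aᵀ * A - Bᵀ * B).PosSemidef) (i : Fin n) :
    ENNReal.ofReal (lev A i) ≤ glev B (A i) ∧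
    glev B (A i) ≤ ENNReal.ofReal (lam * lev A i) ∧
    glev B (A i) ≠ ∞ := by
  have hlam₀ : 0 < lam := zero_lt_one.trans_le hlam
  have hup' : (Aᵀ * A - (1 : ℝ) • (Bᵀ * B)).PosSemidef := by rwa [one_smul]
  obtain ⟨u, hu⟩ := exists_transpose_mul_self_mulVec_eq A (a := A i) fun v hv => congrFun hv i
  obtain ⟨w, hw⟩ := exists_transpose_mul_self_mulVec_eq B (a := A i) fun v hv =>
    congrFun (mulVec_eq_zero_of_posSemidef (inv_pos.mpr hlam₀) hlow hv) i
  have hlev_le := mul_dotProduct_le_of_posSemidef zero_le_one hup' hw hu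
  have hglev_le := mul_dotProduct_le_of_posSemidef (inv_nonneg.mpr hlam₀.le) hlow hu hw
  rw [lev_eq_dotProduct hu, glev_eq_ofReal_dotProduct hw]
  refine ⟨ENNReal.ofReal_le_ofReal (by linarith), ENNReal.ofReal_le_ofReal ?_, ENNReal.ofReal_ne_top⟩
  rwa [← inv_mul_le_iff₀ hlam₀]
end

section
/- Let a ∈ ℝ^d, let B be a real k×d matrix and C a real m×d matrix, and suppose BᵀB ⪯ CᵀC in the Loewner order. Then inf{‖y‖₂² : y ∈ ℝ^m, Cᵀy = a} ≤ inf{‖x‖₂² : x ∈ ℝᵏ, Bᵀx = a}, where both infima are taken in the extended nonnegative reals with inf ∅ = ∞. In particular, generalized leverage scores are monotone: if BᵀB ⪯ CᵀC then τ_i^C(A) ≤ τ_i^B(A) for every row a_i of any matrix A. -/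
open Matrix
open scoped ENNReal

/-! Given `Bᵀx = a`, the assumption `BᵀB ⪯ CᵀC` means `‖Bv‖ ≤ ‖Cv‖` for all `v`, so
`ker C ⊆ ker B` and `a ∈ (ker B)ᗮ ⊆ (ker C)ᗮ = range (CᵀC)`. Writing `a = CᵀCw`, the vector
`y = Cw` solves `Cᵀy = a`, and
`‖y‖² = ⟪w, a⟫ = ⟪Bw, x⟫ ≤ ‖Bw‖ ‖x‖ ≤ ‖Cw‖ ‖x‖ = ‖y‖ ‖x‖`, hence `‖y‖ ≤ ‖x‖`. -/

open scoped InnerProductSpace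

namespace LinearMap

variable {𝕜 E F G : Type*} [RCLike 𝕜]
  [NormedAddCommGroup E] [InnerProductSpace 𝕜 E] [FiniteDimensional 𝕜 E]
  [NormedAddCommGroup F] [InnerProductSpace 𝕜 F] [FiniteDimensional 𝕜 F]
  [NormedAddCommGroup G] [InnerProductSpace 𝕜 G] [FiniteDimensional 𝕜 G]

theorem norm_apply_le_of_adjoint_comp_self_le {S : E →ₗ[𝕜] F} {T : E →ₗ[𝕜] G}
    (h : S.adjoint ∘ₗ S ≤ T.adjoint ∘ₗ T) (v : E) : ‖S v‖ ≤ ‖T v‖ := by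
  have hsq : ‖S v‖ ^ 2 ≤ ‖T v‖ ^ 2 := by
    simpa [inner_sub_right, adjoint_inner_right, inner_self_eq_norm_sq] using
      h.re_inner_nonneg_right v
  exact pow_le_pow_iff_left₀ (norm_nonneg _) (norm_nonneg _) two_ne_zero |>.mp hsq

theorem exists_adjoint_apply_eq_and_norm_le {S : E →ₗ[𝕜] F} {T : E →ₗ[𝕜] G}
    (hST : ∀ v, ‖S v‖ ≤ ‖T v‖) (x : F) :
    ∃ y : G, T.adjoint y = S.adjoint x ∧ ‖y‖ ≤ ‖x‖ := by
  have hker : ker T ≤ ker S := fun v hv => by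
    simpa [mem_ker.mp hv] using hST v
  obtain ⟨w, hw⟩ : S.adjoint x ∈ (T.adjoint ∘ₗ T).range := by
    rw [range_adjoint_comp_self, ← orthogonal_ker]
    exact Submodule.orthogonal_le hker (S.orthogonal_ker ▸ mem_range_self _ x)
  refine ⟨T w, hw, ?_⟩
  have : ‖T w‖ ^ 2 ≤ ‖T w‖ * ‖x‖ := calc
    ‖T w‖ ^ 2 = RCLike.re ⟪S w, x⟫_𝕜 := by
      rw [← inner_self_eq_norm_sq (𝕜 := 𝕜), ← adjoint_inner_right, ← comp_apply, hw,
        adjoint_inner_right]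
    _ ≤ ‖S w‖ * ‖x‖ := (RCLike.re_le_norm _).trans (norm_inner_le_norm _ _)
    _ ≤ ‖T w‖ * ‖x‖ := by gcongr; exact hST w
  nlinarith [norm_nonneg (T w), norm_nonneg x]

end LinearMap

open scoped ComplexOrder in
theorem Matrix.toEuclideanLin_adjoint_comp_self_le {𝕜 k m d : Type*} [RCLike 𝕜]
    [Fintype k] [DecidableEq k] [Fintype m] [DecidableEq m] [Fintype d] [DecidableEq d]
    {B : Matrix k d 𝕜} {C : Matrix m d 𝕜} (h : (Cᴴ * C - Bᴴ * B).PosSemidef) :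
    (toEuclideanLin B).adjoint ∘ₗ toEuclideanLin B ≤
      (toEuclideanLin C).adjoint ∘ₗ toEuclideanLin C := by
  rw [LinearMap.le_def, ← toEuclideanLin_conjTranspose_eq_adjoint,
    ← toEuclideanLin_conjTranspose_eq_adjoint, ← toLpLin_mul_same, ← toLpLin_mul_same, ← map_sub]
  exact isPositive_toEuclideanLin_iff.mpr h

theorem Matrix.exists_transpose_mulVec_eq_and_sum_sq_le {k m d : Type*}
    [Fintype k] [DecidableEq k] [Fintype m] [DecidableEq m] [Fintype d] [DecidableEq d]
    {B : Matrix k d ℝ} {C : Matrix m d ℝ} (h : (Cᵀ * C - Bᵀ * B).PosSemidef) (x : k → ℝ) :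
    ∃ y : m → ℝ, Cᵀ *ᵥ y = Bᵀ *ᵥ x ∧ ∑ j, y j ^ 2 ≤ ∑ j, x j ^ 2 := by
  rw [← conjTranspose_eq_transpose_of_trivial B, ← conjTranspose_eq_transpose_of_trivial C] at h ⊢
  obtain ⟨y, hy, hle⟩ := LinearMap.exists_adjoint_apply_eq_and_norm_le
    (LinearMap.norm_apply_le_of_adjoint_comp_self_le (toEuclideanLin_adjoint_comp_self_le h))
    (WithLp.toLp 2 x)
  refine ⟨y.ofLp, ?_, ?_⟩
  · rw [← toEuclideanLin_conjTranspose_eq_adjoint, ← toEuclideanLin_conjTranspose_eq_adjoint] at hy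
    exact congrArg WithLp.ofLp hy
  · rw [← EuclideanSpace.real_norm_sq_eq, ← EuclideanSpace.real_norm_sq_eq]
    gcongr

theorem glev_le_glev_of_forall_exists {d k m : ℕ} {a : Fin d → ℝ}
    {B : Matrix (Fin k) (Fin d) ℝ} {C : Matrix (Fin m) (Fin d) ℝ}
    (H : ∀ x, Bᵀ *ᵥ x = a → ∃ y, Cᵀ *ᵥ y = a ∧ ∑ j, y j ^ 2 ≤ ∑ j, x j ^ 2) :
    glev C a ≤ glev B a := by
  unfold glev
  refine le_sInf ?_
  rintro _ ⟨x, hx, rfl⟩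
  obtain ⟨y, hy, hle⟩ := H x hx
  exact le_trans (sInf_le ⟨y, hy, rfl⟩) (ENNReal.ofReal_le_ofReal hle)

/-- generalized leverage scores are monotone in the Loewner order:
if `BᵀB ⪯ CᵀC` then `inf {‖y‖² : Cᵀy = a} ≤ inf {‖x‖² : Bᵀx = a}` (in `[0,∞]`). -/
theorem stmt4 {d k m : ℕ} (a : Fin d → ℝ)
    (B : Matrix (Fin k) (Fin d) ℝ) (C : Matrix (Fin m) (Fin d) ℝ)
    (h : (Cᵀ * C - Bᵀ * B).PosSemidef) :
    glev C a ≤ glev B a :=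
  glev_le_glev_of_forall_exists fun x hx =>
    hx ▸ exists_transpose_mulVec_eq_and_sum_sq_le h x
end

section
/- Let A be a real n×d matrix with rows a_1,…,a_n, let S ⊆ {1,…,n}, and let i ∉ S. Let D_S denote the n×n diagonal 0–1 indicator matrix of S (so (D_S)_{jj} = 1 iff j ∈ S), and let S^{(i)} = S ∪ {i}. Then, in the extended nonnegative reals, τ_i^{D_{S^{(i)}}A}(A) = (1 + (τ_i^{D_S A}(A))⁻¹)⁻¹, where the right-hand side uses the conventions ∞⁻¹ = 0 and 0⁻¹ = ∞ (so in particular it equals 1 when τ_i^{D_S A}(A) = ∞). -/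
open Matrix
open scoped ENNReal

/-- The diagonal 0–1 indicator matrix `D_S` of a subset `S` of row indices. -/
def ind {n : ℕ} (S : Finset (Fin n)) : Matrix (Fin n) (Fin n) ℝ :=
  Matrix.diagonal (fun j => if j ∈ S then 1 else 0)

/-!
Write `τ = τ_i^{D_S A}(A)`. Since `i ∉ S`, the matrix `D_{S⁽ⁱ⁾} A` is `D_S A` with its zero `i`-th
row replaced by `a_i`. A representation of `a_i` by its rows is `t a_i` plus a representation of
`(1 - t) a_i` by the rows of `D_S A`, whose cheapest cost is `(1 - t)² τ` by scaling. Hence the new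
score is `inf_t (t² + (1 - t)² τ)`, a one-variable minimization with value `τ / (1 + τ)`, and `1`
(at `t = 1`) when `τ = ∞`.
-/

theorem sum_sq_update_add_sq {ι : Type*} [Fintype ι] [DecidableEq ι] (y : ι → ℝ) (i : ι)
    (t : ℝ) : ∑ j, Function.update y i t j ^ 2 + y i ^ 2 = t ^ 2 + ∑ j, y j ^ 2 := by
  rw [Finset.sum_congr rfl fun j _ => Function.apply_update (fun _ x => x ^ 2) y i t j,
    Finset.sum_update_of_mem (Finset.mem_univ i),
    Finset.sum_eq_add_sum_sdiff_singleton_of_mem (Finset.mem_univ i) (fun j => y j ^ 2)]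
  ring

theorem transpose_updateRow_mulVec_update {k d : ℕ} {B : Matrix (Fin k) (Fin d) ℝ} {i : Fin k}
    (hB : B i = 0) (v : Fin d → ℝ) (y : Fin k → ℝ) (t : ℝ) :
    (B.updateRow i v)ᵀ *ᵥ Function.update y i t = t • v + Bᵀ *ᵥ y := by
  rw [mulVec_transpose, mulVec_transpose]
  funext c
  simp only [vecMul, dotProduct, updateRow_apply, mul_ite, Fintype.sum_eq_add_sum_compl i,
    if_pos, Function.update_self, Pi.add_apply, Pi.smul_apply, smul_eq_mul, hB, Pi.zero_apply,
    mul_zero, zero_add, add_right_inj]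
  refine Finset.sum_congr rfl fun j hj => ?_
  have hji : j ≠ i := by simpa using hj
  simp [hji]

section Glev

variable {k d : ℕ}

theorem glev_eq_iInf (B : Matrix (Fin k) (Fin d) ℝ) (a : Fin d → ℝ) :
    glev B a = ⨅ (x : Fin k → ℝ) (_ : Bᵀ *ᵥ x = a), ENNReal.ofReal (∑ j, x j ^ 2) :=
  le_antisymm (le_iInf₂ fun x hx => sInf_le ⟨x, hx, rfl⟩)
    (le_sInf <| by rintro _ ⟨x, hx, rfl⟩; exact iInf₂_le x hx)

theorem glev_le {B : Matrix (Fin k) (Fin d) ℝ} {a : Fin d → ℝ} {x : Fin k → ℝ} (hx : Bᵀ *ᵥ x = a) :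
    glev B a ≤ ENNReal.ofReal (∑ j, x j ^ 2) :=
  sInf_le ⟨x, hx, rfl⟩

theorem glev_smul (B : Matrix (Fin k) (Fin d) ℝ) (c : ℝ) (a : Fin d → ℝ) :
    glev B (c • a) = ENNReal.ofReal (c ^ 2) * glev B a := by
  rcases eq_or_ne c 0 with rfl | hc
  · simpa using glev_le (B := B) (x := 0) (by simp)
  have hc2 : 0 < c ^ 2 := by positivity
  have hc2' : ENNReal.ofReal (c ^ 2) ≠ 0 := (ENNReal.ofReal_pos.2 hc2).ne'
  rw [glev_eq_iInf, glev_eq_iInf, ENNReal.mul_iInf_of_ne hc2' ENNReal.ofReal_ne_top,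
    ← (MulAction.surjective₀ hc).iInf_comp]
  refine iInf_congr fun y => ?_
  rw [ENNReal.mul_iInf_of_ne hc2' ENNReal.ofReal_ne_top, mulVec_smul,
    smul_right_inj hc, ← ENNReal.ofReal_mul hc2.le]
  simp only [Pi.smul_apply, smul_eq_mul, mul_pow, Finset.mul_sum]

theorem glev_updateRow {B : Matrix (Fin k) (Fin d) ℝ} {i : Fin k} (hB : B i = 0) (v a : Fin d → ℝ) :
    glev (B.updateRow i v) a = ⨅ t : ℝ, ENNReal.ofReal (t ^ 2) + glev B (a - t • v) := by
  apply le_antisymm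
  · refine le_iInf fun t => ?_
    rw [glev_eq_iInf B, ENNReal.add_iInf]
    refine le_iInf fun y => ?_
    rw [ENNReal.add_iInf]
    refine le_iInf fun hy => ?_
    calc glev (B.updateRow i v) a
        ≤ ENNReal.ofReal (∑ j, Function.update y i t j ^ 2) :=
          glev_le (by rw [transpose_updateRow_mulVec_update hB, hy, add_sub_cancel])
      _ ≤ ENNReal.ofReal (t ^ 2 + ∑ j, y j ^ 2) :=
          ENNReal.ofReal_le_ofReal (by linarith [sum_sq_update_add_sq y i t, sq_nonneg (y i)])
      _ = ENNReal.ofReal (t ^ 2) + ENNReal.ofReal (∑ j, y j ^ 2) :=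
          ENNReal.ofReal_add (sq_nonneg t) (by positivity)
  · rw [glev_eq_iInf]
    refine le_iInf₂ fun z hz => ?_
    set y := Function.update z i 0
    have hzy : Function.update y i (z i) = z := by simp [y]
    rw [← hzy, transpose_updateRow_mulVec_update hB] at hz
    have hcost : z i ^ 2 + ∑ j, y j ^ 2 = ∑ j, z j ^ 2 := by
      have h := sum_sq_update_add_sq y i (z i)
      rw [hzy, show y i = 0 by simp [y]] at h
      linarith
    calc ⨅ t : ℝ, ENNReal.ofReal (t ^ 2) + glev B (a - t • v)
        ≤ ENNReal.ofReal (z i ^ 2) + glev B (a - z i • v) := iInf_le _ (z i)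
      _ ≤ ENNReal.ofReal (z i ^ 2) + ENNReal.ofReal (∑ j, y j ^ 2) :=
          by gcongr; exact glev_le (eq_sub_of_add_eq' hz)
      _ = ENNReal.ofReal (∑ j, z j ^ 2) := by
          rw [← ENNReal.ofReal_add (sq_nonneg _) (by positivity), hcost]

theorem glev_updateRow_self {B : Matrix (Fin k) (Fin d) ℝ} {i : Fin k} (hB : B i = 0) (a : Fin d → ℝ) :
    glev (B.updateRow i a) a =
      ⨅ t : ℝ, ENNReal.ofReal (t ^ 2) + ENNReal.ofReal ((1 - t) ^ 2) * glev B a := by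
  rw [glev_updateRow hB]
  refine iInf_congr fun t => ?_
  rw [← glev_smul, sub_smul, one_smul]

end Glev

theorem ENNReal.inv_one_add_inv_ofReal {c : ℝ} (hc : 0 ≤ c) :
    (1 + (ENNReal.ofReal c)⁻¹)⁻¹ = ENNReal.ofReal (c / (1 + c)) := by
  rcases hc.eq_or_lt with rfl | hc
  · simp
  rw [← ENNReal.ofReal_inv_of_pos hc, ← ENNReal.ofReal_one,
    ← ENNReal.ofReal_add zero_le_one (by positivity),
    ← ENNReal.ofReal_inv_of_pos (by positivity)]
  congr 1
  field_simp
  ring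

/-- `t ↦ t² + (1 - t)² τ` is minimized at `t = τ / (1 + τ)`, since
`(1 + τ) (t² + (1 - t)² τ) - τ = ((1 + τ) t - τ)²`. -/
theorem ENNReal.iInf_ofReal_sq_add_ofReal_one_sub_sq_mul (τ : ℝ≥0∞) :
    ⨅ t : ℝ, ENNReal.ofReal (t ^ 2) + ENNReal.ofReal ((1 - t) ^ 2) * τ = (1 + τ⁻¹)⁻¹ := by
  rcases eq_or_ne τ ⊤ with rfl | hτ
  · rw [ENNReal.inv_top, add_zero, inv_one]
    refine le_antisymm (iInf_le_of_le 1 (by simp)) (le_iInf fun t => ?_)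
    rcases eq_or_ne t 1 with rfl | ht
    · simp
    · rw [ENNReal.mul_top (ENNReal.ofReal_pos.2 (by positivity [sub_ne_zero.2 ht.symm])).ne']
      simp
  obtain ⟨c, hc, rfl⟩ : ∃ c, 0 ≤ c ∧ τ = ENNReal.ofReal c :=
    ⟨τ.toReal, ENNReal.toReal_nonneg, (ENNReal.ofReal_toReal hτ).symm⟩
  have h1c : 0 < 1 + c := by linarith
  have hval : ∀ t : ℝ, ENNReal.ofReal (t ^ 2) + ENNReal.ofReal ((1 - t) ^ 2) * ENNReal.ofReal c
      = ENNReal.ofReal (t ^ 2 + (1 - t) ^ 2 * c) := fun t => by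
    rw [← ENNReal.ofReal_mul (sq_nonneg _), ← ENNReal.ofReal_add (sq_nonneg _) (by positivity)]
  simp_rw [hval, ENNReal.inv_one_add_inv_ofReal hc]
  refine le_antisymm (iInf_le_of_le (c / (1 + c)) (le_of_eq ?_)) (le_iInf fun t => ?_)
  · congr 1
    field_simp
    ring
  · refine ENNReal.ofReal_le_ofReal ((div_le_iff₀ h1c).2 ?_)
    nlinarith [sq_nonneg ((1 + c) * t - c)]

theorem ind_insert_mul {n d : ℕ} (A : Matrix (Fin n) (Fin d) ℝ) {S : Finset (Fin n)} {i : Fin n}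
    (hi : i ∉ S) : ind (insert i S) * A = (ind S * A).updateRow i (A i) := by
  ext j c
  by_cases hj : j = i
  · subst hj; simp [ind, updateRow_apply]
  · simp [ind, updateRow_apply, hj]

theorem ind_mul_apply_of_notMem {n d : ℕ} (A : Matrix (Fin n) (Fin d) ℝ) {S : Finset (Fin n)}
    {i : Fin n} (hi : i ∉ S) : (ind S * A) i = 0 := by
  ext c; simp [ind, hi]

/-- for `i ∉ S` and `S⁽ⁱ⁾ = S ∪ {i}`, in the extended nonnegative reals,
`τᵢ^{D_{S⁽ⁱ⁾}A}(A) = (1 + (τᵢ^{D_S A}(A))⁻¹)⁻¹` (with `∞⁻¹ = 0`, `0⁻¹ = ∞`). -/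
theorem stmt5 {n d : ℕ} (A : Matrix (Fin n) (Fin d) ℝ) (S : Finset (Fin n))
    (i : Fin n) (hi : i ∉ S) :
    glev (ind (insert i S) * A) (A i) = (1 + (glev (ind S * A) (A i))⁻¹)⁻¹ := by
  rw [ind_insert_mul A hi, glev_updateRow_self (ind_mul_apply_of_notMem A hi),
    ENNReal.iInf_ofReal_sq_add_ofReal_one_sub_sq_mul]
end

section
/- Let A be a real n×d matrix with rows a_1,…,a_n and let S ⊆ {1,…,n} with diagonal 0–1 indicator matrix D_S. For each i define the estimate τ̃_i := τ_i^{D_S A}(A) if i ∈ S, and τ̃_i := (1 + (τ_i^{D_S A}(A))⁻¹)⁻¹ otherwise (extended-real arithmetic, so τ̃_i = 1 when τ_i^{D_S A}(A) = ∞). Then every estimate is an upper bound on the true leverage score: τ̃_i ≥ τ_i(A) for all i. -/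
open Matrix
open scoped ENNReal

/-! If `(D_S A)ᵀx = aᵢ`, then `x` restricted to `S` is a feasible point for `τᵢ(A)`; this gives
the bound for `i ∈ S`. For `i ∉ S` the restriction `z` is orthogonal to `eᵢ`, so with
`s = ‖z‖²` and `c = 1/(s+1)` the mixture `y = c z + (1 - c) eᵢ` of `z` with the trivial
representation `eᵢ` has `Aᵀy = aᵢ` and `‖y‖² = s/(s+1) = (1 + s⁻¹)⁻¹`. Both bounds pass to the
infimum defining `τᵢ^{D_S A}(A)` because `t ↦ (1 + t⁻¹)⁻¹` is monotone and continuous on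
`[0,∞]`; the empty case `τᵢ^{D_S A}(A) = ∞` needs `τᵢ(A) ≤ 1`. -/

section LeverageScore

variable {n d : ℕ} (A : Matrix (Fin n) (Fin d) ℝ)

lemma transpose_ind_mul_mulVec (S : Finset (Fin n)) (x : Fin n → ℝ) :
    (ind S * A)ᵀ *ᵥ x = Aᵀ *ᵥ (fun j => if j ∈ S then x j else 0) := by
  rw [Matrix.transpose_mul, ind, Matrix.diagonal_transpose, ← Matrix.mulVec_mulVec]
  congr 1
  ext j
  simp [Matrix.mulVec_diagonal]

lemma sum_sq_ite_le (S : Finset (Fin n)) (x : Fin n → ℝ) :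
    ∑ j, (if j ∈ S then x j else 0) ^ 2 ≤ ∑ j, x j ^ 2 :=
  Finset.sum_le_sum fun j _ => by split_ifs <;> simp [sq_nonneg]

lemma lev_le_sum_sq {i : Fin n} {x : Fin n → ℝ} (hx : Aᵀ *ᵥ x = A i) :
    lev A i ≤ ∑ j, x j ^ 2 :=
  csInf_le ⟨0, by rintro t ⟨y, -, rfl⟩; positivity⟩ ⟨x, hx, rfl⟩

lemma transpose_mulVec_single (i : Fin n) (b : ℝ) : Aᵀ *ᵥ Pi.single i b = b • A i := by
  ext j; simp [Matrix.mulVec_single, mul_comm]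

lemma lev_le_one (i : Fin n) : lev A i ≤ 1 := by
  simpa [Pi.single_apply, ite_pow] using
    lev_le_sum_sq A (x := Pi.single i 1) (by rw [transpose_mulVec_single, one_smul])

lemma sum_sq_add_single {x : Fin n → ℝ} {i : Fin n} (hxi : x i = 0) (b : ℝ) :
    ∑ j, (x j + (Pi.single i b : Fin n → ℝ) j) ^ 2 = ∑ j, x j ^ 2 + b ^ 2 := by
  have hpoint : ∀ j, (x j + (Pi.single i b : Fin n → ℝ) j) ^ 2
      = x j ^ 2 + (Pi.single i (b ^ 2) : Fin n → ℝ) j := by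
    intro j
    by_cases hj : j = i
    · subst hj; simp [hxi]
    · simp [hj]
  simp only [hpoint, Finset.sum_add_distrib, Finset.sum_pi_single', Finset.mem_univ, if_true]

lemma lev_le_div_add_one {i : Fin n} {x : Fin n → ℝ} {s : ℝ} (hx : Aᵀ *ᵥ x = A i)
    (hxi : x i = 0) (hs : ∑ j, x j ^ 2 ≤ s) : lev A i ≤ s / (s + 1) := by
  have hs0 : 0 ≤ s := (Finset.sum_nonneg fun j _ => sq_nonneg (x j)).trans hs
  set c : ℝ := 1 / (s + 1) with hc
  have hcx : (c • x) i = 0 := by simp [hxi]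
  have hy : Aᵀ *ᵥ (c • x + Pi.single i (1 - c)) = A i := by
    rw [Matrix.mulVec_add, Matrix.mulVec_smul, hx, transpose_mulVec_single, ← add_smul,
      add_sub_cancel, one_smul]
  calc lev A i ≤ ∑ j, ((c • x) j + (Pi.single i (1 - c) : Fin n → ℝ) j) ^ 2 :=
        lev_le_sum_sq A hy
    _ = c ^ 2 * ∑ j, x j ^ 2 + (1 - c) ^ 2 := by
      rw [sum_sq_add_single hcx, Finset.mul_sum]
      simp only [Pi.smul_apply, smul_eq_mul, mul_pow]
    _ ≤ c ^ 2 * s + (1 - c) ^ 2 := by gcongr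
    _ = s / (s + 1) := by rw [hc]; field_simp; ring

end LeverageScore

lemma le_map_glev {k d : ℕ} {B : Matrix (Fin k) (Fin d) ℝ} {a : Fin d → ℝ}
    {f : ℝ≥0∞ → ℝ≥0∞} (hf : Monotone f) (hfc : Continuous f) {c : ℝ≥0∞} (htop : c ≤ f ⊤)
    (h : ∀ x, Bᵀ *ᵥ x = a → c ≤ f (ENNReal.ofReal (∑ j, x j ^ 2))) : c ≤ f (glev B a) := by
  rw [glev]
  rcases Set.eq_empty_or_nonempty
    {t : ℝ≥0∞ | ∃ x : Fin k → ℝ, Bᵀ *ᵥ x = a ∧ t = ENNReal.ofReal (∑ j, x j ^ 2)} with hT | hT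
  · rwa [hT, sInf_empty]
  · rw [hf.map_csInf_of_continuousAt hfc.continuousAt hT]
    refine le_sInf ?_
    rintro _ ⟨_, ⟨x, hx, rfl⟩, rfl⟩
    exact h x hx

lemma monotone_inv_one_add_inv : Monotone fun t : ℝ≥0∞ => (1 + t⁻¹)⁻¹ :=
  fun _ _ h => ENNReal.inv_le_inv.2 (add_le_add_right (ENNReal.inv_le_inv.2 h) 1)

lemma continuous_inv_one_add_inv : Continuous fun t : ℝ≥0∞ => (1 + t⁻¹)⁻¹ := by
  fun_prop

lemma ENNReal.ofReal_div_add_one {s : ℝ} (hs : 0 ≤ s) :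
    ENNReal.ofReal (s / (s + 1)) = (1 + (ENNReal.ofReal s)⁻¹)⁻¹ := by
  rcases hs.eq_or_lt with rfl | hpos
  · simp
  · rw [← ENNReal.ofReal_inv_of_pos hpos, ← ENNReal.ofReal_one,
      ← ENNReal.ofReal_add zero_le_one (by positivity),
      ← ENNReal.ofReal_inv_of_pos (by positivity)]
    congr 1
    field_simp

/-- the uniform-sampling leverage score estimates
`τ̃ᵢ = τᵢ^{D_S A}(A)` if `i ∈ S` and `τ̃ᵢ = (1 + (τᵢ^{D_S A}(A))⁻¹)⁻¹` otherwise
are upper bounds on the true leverage scores: `τ̃ᵢ ≥ τᵢ(A)`. -/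
theorem stmt6 {n d : ℕ} (A : Matrix (Fin n) (Fin d) ℝ) (S : Finset (Fin n)) (i : Fin n) :
    ENNReal.ofReal (lev A i) ≤
      (if i ∈ S then glev (ind S * A) (A i)
       else (1 + (glev (ind S * A) (A i))⁻¹)⁻¹) := by
  split_ifs with hiS
  · refine le_map_glev monotone_id continuous_id le_top fun x hx => ?_
    rw [transpose_ind_mul_mulVec] at hx
    exact ENNReal.ofReal_le_ofReal ((lev_le_sum_sq A hx).trans (sum_sq_ite_le S x))
  · refine le_map_glev monotone_inv_one_add_inv continuous_inv_one_add_inv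
      (by simpa using lev_le_one A i) fun x hx => ?_
    rw [transpose_ind_mul_mulVec] at hx
    rw [← ENNReal.ofReal_div_add_one (Finset.sum_nonneg fun j _ => sq_nonneg (x j))]
    exact ENNReal.ofReal_le_ofReal
      (lev_le_div_add_one A hx (by simp [hiS]) (sum_sq_ite_le S x))
end
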